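/- Let Ω ⊆ ℝⁿ, δ ∈ (0, n], and let f, g : Ω → [0, ∞] be arbitrary (not necessarily measurable) functions. If p, q > 1 with 1/p + 1/q = 1, then ∫_Ω f(x) g(x) dH^δ_∞ ≤ 2 (∫_Ω f(x)^p dH^δ_∞)^{1/p} (∫_Ω g(x)^q dH^δ_∞)^{1/q} (Hölder's inequality for Choquet integrals). -/

import Mathlib

/-!
Hausdorff content is an outer measure, and the inequality holds for the Choquet integral with
respect to any outer measure `μ`. Young's inequality gives `f g ≤ max (f ^ p) (g ^ q)`, so every
superlevel set of `f g` lies in the union of those of `f ^ p` and `g ^ q`, and subadditivity of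
`μ` yields `∫ f g ≤ ∫ f ^ p + ∫ g ^ q`. The Choquet integral is positively homogeneous, so
rescaling `f` and `g` until both integrals on the right equal `1` gives the factor `2`. When one of
them vanishes, countable subadditivity shows that `f g` is positive only on a `μ`-null set.
-/

open Metric Set ENNReal

noncomputable def hContent (n : ℕ) (δ : ℝ) (E : Set (EuclideanSpace ℝ (Fin n))) : ℝ≥0∞ :=
  ⨅ (c : ℕ → EuclideanSpace ℝ (Fin n)) (r : ℕ → NNReal)
    (_ : E ⊆ ⋃ i, Metric.ball (c i) (r i)), ∑' i, (r i : ℝ≥0∞) ^ δ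

noncomputable def choquet (n : ℕ) (δ : ℝ) (Ω : Set (EuclideanSpace ℝ (Fin n)))
    (f : EuclideanSpace ℝ (Fin n) → ℝ≥0∞) : ℝ≥0∞ :=
  ∫⁻ t in Set.Ioi (0 : ℝ), hContent n δ {x | x ∈ Ω ∧ ENNReal.ofReal t < f x}

open MeasureTheory

lemma lintegral_Ioi_comp_mul_left (φ : ℝ → ℝ≥0∞) {k : ℝ} (hk : 0 < k) :
    ∫⁻ t in Ioi 0, φ (k * t) = ENNReal.ofReal k⁻¹ * ∫⁻ s in Ioi 0, φ s := by
  have hemb : MeasurableEmbedding (k * ·) := (Homeomorph.mulLeft₀ k hk.ne').measurableEmbedding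
  have hpre : (k * ·) ⁻¹' Ioi 0 = Ioi 0 := by
    ext t
    simp [mul_pos_iff_of_pos_left hk]
  have hmap : (volume.restrict (Ioi 0)).map (k * ·) =
      ENNReal.ofReal k⁻¹ • volume.restrict (Ioi 0) := by
    conv_lhs => rw [← hpre]
    rw [← Measure.restrict_map hemb.measurable measurableSet_Ioi, Real.map_volume_mul_left hk.ne',
      Measure.restrict_smul, abs_of_pos (inv_pos.2 hk)]
  rw [← hemb.lintegral_map, hmap, lintegral_smul_measure, smul_eq_mul]

lemma ENNReal.mul_le_rpow_sup_rpow (a b : ℝ≥0∞) {p q : ℝ} (hpq : p.HolderConjugate q) :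
    a * b ≤ a ^ p ⊔ b ^ q :=
  calc a * b ≤ a ^ p / ENNReal.ofReal p + b ^ q / ENNReal.ofReal q := young_inequality a b hpq
    _ ≤ (a ^ p ⊔ b ^ q) / ENNReal.ofReal p + (a ^ p ⊔ b ^ q) / ENNReal.ofReal q := by
      gcongr <;> simp
    _ = a ^ p ⊔ b ^ q := by
      rw [div_eq_mul_inv, div_eq_mul_inv, ← mul_add, hpq.inv_add_inv_ennreal, mul_one]

namespace MeasureTheory.OuterMeasure

variable {α : Type*}

def superlevelSet (Ω : Set α) (f : α → ℝ≥0∞) (t : ℝ) : Set α :=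
  {x | x ∈ Ω ∧ ENNReal.ofReal t < f x}

noncomputable def choquetIntegral (μ : OuterMeasure α) (Ω : Set α) (f : α → ℝ≥0∞) : ℝ≥0∞ :=
  ∫⁻ t in Ioi 0, μ (superlevelSet Ω f t)

variable {μ : OuterMeasure α} {Ω : Set α} {f g : α → ℝ≥0∞}

lemma antitone_superlevelSet : Antitone (superlevelSet Ω f) :=
  fun _ _ hst _ hx => ⟨hx.1, (ENNReal.ofReal_le_ofReal hst).trans_lt hx.2⟩

lemma antitone_measure_superlevelSet : Antitone fun t => μ (superlevelSet Ω f t) :=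
  fun _ _ hst => μ.mono (antitone_superlevelSet hst)

lemma superlevelSet_mono (h : f ≤ g) (t : ℝ) : superlevelSet Ω f t ⊆ superlevelSet Ω g t :=
  fun x hx => ⟨hx.1, hx.2.trans_le (h x)⟩

lemma superlevelSet_sup (t : ℝ) :
    superlevelSet Ω (f ⊔ g) t = superlevelSet Ω f t ∪ superlevelSet Ω g t := by
  ext x
  simp only [superlevelSet, mem_ofPred_eq, mem_union, Pi.sup_apply, lt_sup_iff, and_or_left]

lemma superlevelSet_const_mul {c : ℝ≥0∞} (hc₀ : c ≠ 0) (hc : c ≠ ⊤) (t : ℝ) :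
    superlevelSet Ω (fun x => c * f x) t = superlevelSet Ω f (c.toReal⁻¹ * t) := by
  ext x
  rw [superlevelSet, superlevelSet, ENNReal.ofReal_mul (by positivity),
    ofReal_inv_of_pos (ENNReal.toReal_pos hc₀ hc), ofReal_toReal hc, ← ENNReal.div_eq_inv_mul]
  simp only [ENNReal.div_lt_iff (Or.inl hc₀) (Or.inl hc), mul_comm]

lemma superlevelSet_zero_eq_iUnion :
    superlevelSet Ω f 0 = ⋃ n : ℕ, superlevelSet Ω f (1 / (n + 1)) := by
  refine (iUnion_subset fun n => antitone_superlevelSet (by positivity)).antisymm'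
    fun x ⟨hxΩ, hx⟩ => ?_
  obtain ⟨r, -, hr₀, hr⟩ := ENNReal.lt_iff_exists_real_btwn.1 hx
  obtain ⟨n, hn⟩ := exists_nat_one_div_lt (ENNReal.ofReal_lt_ofReal_iff'.1 hr₀).1
  exact mem_iUnion.2
    ⟨n, hxΩ, (ENNReal.ofReal_lt_ofReal_iff_of_nonneg (by positivity)).2 hn |>.trans hr⟩

lemma choquetIntegral_mono (h : f ≤ g) : μ.choquetIntegral Ω f ≤ μ.choquetIntegral Ω g :=
  lintegral_mono fun t => μ.mono (superlevelSet_mono h t)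

lemma choquetIntegral_sup_le :
    μ.choquetIntegral Ω (f ⊔ g) ≤ μ.choquetIntegral Ω f + μ.choquetIntegral Ω g :=
  calc μ.choquetIntegral Ω (f ⊔ g)
      ≤ ∫⁻ t in Ioi 0, (μ (superlevelSet Ω f t) + μ (superlevelSet Ω g t)) :=
        lintegral_mono fun t => superlevelSet_sup (Ω := Ω) t ▸ measure_union_le _ _
    _ = μ.choquetIntegral Ω f + μ.choquetIntegral Ω g :=
        lintegral_add_left antitone_measure_superlevelSet.measurable _

lemma choquetIntegral_const_mul {c : ℝ≥0∞} (hc₀ : c ≠ 0) (hc : c ≠ ⊤) :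
    μ.choquetIntegral Ω (fun x => c * f x) = c * μ.choquetIntegral Ω f := by
  have hc' : 0 < c.toReal := ENNReal.toReal_pos hc₀ hc
  simp only [choquetIntegral, superlevelSet_const_mul hc₀ hc]
  rw [lintegral_Ioi_comp_mul_left (fun s => μ (superlevelSet Ω f s)) (inv_pos.2 hc'), inv_inv,
    ofReal_toReal hc]

lemma ofReal_mul_measure_superlevelSet_le (s : ℝ) :
    ENNReal.ofReal s * μ (superlevelSet Ω f s) ≤ μ.choquetIntegral Ω f :=
  calc ENNReal.ofReal s * μ (superlevelSet Ω f s)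
      = ∫⁻ _ in Ioc 0 s, μ (superlevelSet Ω f s) := by
        rw [setLIntegral_const, Real.volume_Ioc, sub_zero, mul_comm]
    _ ≤ ∫⁻ t in Ioc 0 s, μ (superlevelSet Ω f t) :=
        setLIntegral_mono' measurableSet_Ioc fun _ ht => antitone_measure_superlevelSet ht.2
    _ ≤ μ.choquetIntegral Ω f := lintegral_mono_set Ioc_subset_Ioi_self

lemma choquetIntegral_eq_zero_iff :
    μ.choquetIntegral Ω f = 0 ↔ μ (superlevelSet Ω f 0) = 0 := by
  refine ⟨fun h => ?_, fun h => ?_⟩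
  · rw [superlevelSet_zero_eq_iUnion, measure_iUnion_null_iff]
    intro n
    have := h ▸ ofReal_mul_measure_superlevelSet_le (μ := μ) (Ω := Ω) (f := f) (1 / (n + 1))
    simpa [(Nat.cast_add_one_pos n).not_ge] using this
  · refine nonpos_iff_eq_zero.1 <| (setLIntegral_mono measurable_const fun t ht =>
      h ▸ antitone_measure_superlevelSet (le_of_lt ht)).trans_eq lintegral_zero

lemma superlevelSet_zero_subset (hfg : ∀ x ∈ Ω, 0 < g x → 0 < f x) :
    superlevelSet Ω g 0 ⊆ superlevelSet Ω f 0 := by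
  rintro x ⟨hxΩ, hx⟩
  rw [ENNReal.ofReal_zero] at hx
  exact ⟨hxΩ, ENNReal.ofReal_zero ▸ hfg x hxΩ hx⟩

lemma choquetIntegral_eq_zero_of_imp_pos (hfg : ∀ x ∈ Ω, 0 < g x → 0 < f x)
    (hf : μ.choquetIntegral Ω f = 0) : μ.choquetIntegral Ω g = 0 :=
  choquetIntegral_eq_zero_iff.2 <| measure_mono_null (superlevelSet_zero_subset hfg)
    (choquetIntegral_eq_zero_iff.1 hf)

variable {p q : ℝ}

lemma choquetIntegral_mul_eq_zero_of_rpow (hp : 0 < p)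
    (h : μ.choquetIntegral Ω (fun x => f x ^ p) = 0) :
    μ.choquetIntegral Ω (fun x => f x * g x) = 0 :=
  choquetIntegral_eq_zero_of_imp_pos
    (fun _ _ hx => rpow_pos_of_nonneg (pos_of_ne_zero (left_ne_zero_of_mul hx.ne')) hp.le) h

lemma choquetIntegral_mul_le_add (hpq : p.HolderConjugate q) :
    μ.choquetIntegral Ω (fun x => f x * g x) ≤
      μ.choquetIntegral Ω (fun x => f x ^ p) + μ.choquetIntegral Ω (fun x => g x ^ q) :=
  (choquetIntegral_mono fun x => mul_le_rpow_sup_rpow (f x) (g x) hpq).trans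
    choquetIntegral_sup_le

lemma choquetIntegral_rpow_normalize (hp : 0 < p) (h₀ : μ.choquetIntegral Ω (fun x => f x ^ p) ≠ 0)
    (h : μ.choquetIntegral Ω (fun x => f x ^ p) ≠ ⊤) :
    μ.choquetIntegral Ω (fun x => (((μ.choquetIntegral Ω fun x => f x ^ p) ^ (1 / p))⁻¹ * f x) ^ p)
      = 1 := by
  simp_rw [ENNReal.mul_rpow_of_nonneg _ _ hp.le, ENNReal.inv_rpow, one_div,
    ENNReal.rpow_inv_rpow hp.ne']
  rw [choquetIntegral_const_mul (ENNReal.inv_ne_zero.2 h) (ENNReal.inv_ne_top.2 h₀),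
    ENNReal.inv_mul_cancel h₀ h]

theorem choquetIntegral_mul_le (hpq : p.HolderConjugate q) :
    μ.choquetIntegral Ω (fun x => f x * g x) ≤
      2 * (μ.choquetIntegral Ω fun x => f x ^ p) ^ (1 / p) *
        (μ.choquetIntegral Ω fun x => g x ^ q) ^ (1 / q) := by
  set A := μ.choquetIntegral Ω fun x => f x ^ p
  set B := μ.choquetIntegral Ω fun x => g x ^ q
  have hp := hpq.pos
  have hq := hpq.symm.pos
  obtain hA₀ | hA₀ := eq_or_ne A 0
  · simp [choquetIntegral_mul_eq_zero_of_rpow hp hA₀]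
  obtain hB₀ | hB₀ := eq_or_ne B 0
  · simp [mul_comm (f _), choquetIntegral_mul_eq_zero_of_rpow hq hB₀]
  set a := A ^ (1 / p)
  set b := B ^ (1 / q)
  have ha₀ : a ≠ 0 := (rpow_pos_of_nonneg (pos_of_ne_zero hA₀) (by positivity)).ne'
  have hb₀ : b ≠ 0 := (rpow_pos_of_nonneg (pos_of_ne_zero hB₀) (by positivity)).ne'
  obtain hA | hA := eq_or_ne A ⊤
  · simp [a, hA, hp, hb₀]
  obtain hB | hB := eq_or_ne B ⊤
  · simp [b, hB, hq, ha₀]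
  have ha : a ≠ ⊤ := rpow_ne_top_of_nonneg (by positivity) hA
  have hb : b ≠ ⊤ := rpow_ne_top_of_nonneg (by positivity) hB
  -- rescaling `f` by `a⁻¹` and `g` by `b⁻¹` makes both integrals of the additive bound equal `1`
  have hnorm : a⁻¹ * b⁻¹ * μ.choquetIntegral Ω (fun x => f x * g x) ≤ 2 :=
    calc a⁻¹ * b⁻¹ * μ.choquetIntegral Ω (fun x => f x * g x)
        = μ.choquetIntegral Ω (fun x => a⁻¹ * f x * (b⁻¹ * g x)) := by
          rw [← choquetIntegral_const_mul
            (mul_ne_zero (ENNReal.inv_ne_zero.2 ha) (ENNReal.inv_ne_zero.2 hb))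
            (mul_ne_top (inv_ne_top.2 ha₀) (inv_ne_top.2 hb₀))]
          simp_rw [mul_mul_mul_comm]
      _ ≤ 1 + 1 := (choquetIntegral_mul_le_add hpq).trans_eq <| by
          rw [choquetIntegral_rpow_normalize hp hA₀ hA, choquetIntegral_rpow_normalize hq hB₀ hB]
      _ = 2 := one_add_one_eq_two
  calc μ.choquetIntegral Ω (fun x => f x * g x)
      = a * b * (a⁻¹ * b⁻¹ * μ.choquetIntegral Ω fun x => f x * g x) := by
        rw [← mul_assoc, mul_mul_mul_comm, ENNReal.mul_inv_cancel ha₀ ha,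
          ENNReal.mul_inv_cancel hb₀ hb, one_mul, one_mul]
    _ ≤ a * b * 2 := by gcongr
    _ = 2 * a * b := by ring

end MeasureTheory.OuterMeasure

section HausdorffContent

variable {n : ℕ} {δ : ℝ}

lemma hContent_le_tsum {ι : Type*} [Denumerable ι] {E : Set (EuclideanSpace ℝ (Fin n))}
    (c : ι → EuclideanSpace ℝ (Fin n)) (r : ι → NNReal) (hE : E ⊆ ⋃ i, ball (c i) (r i)) :
    hContent n δ E ≤ ∑' i, (r i : ℝ≥0∞) ^ δ := by
  let e := (Denumerable.eqv ι).symm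
  have hE' : E ⊆ ⋃ k, ball (c (e k)) (r (e k)) :=
    e.surjective.iUnion_comp (fun i => ball (c i) (r i)) ▸ hE
  exact (iInf₂_le_of_le (c ∘ e) (r ∘ e) (iInf_le _ hE')).trans_eq
    (e.tsum_eq fun i => (r i : ℝ≥0∞) ^ δ)

lemma exists_ball_cover_tsum_lt {E : Set (EuclideanSpace ℝ (Fin n))} {a : ℝ≥0∞}
    (h : hContent n δ E < a) :
    ∃ (c : ℕ → EuclideanSpace ℝ (Fin n)) (r : ℕ → NNReal),
      E ⊆ ⋃ i, ball (c i) (r i) ∧ ∑' i, (r i : ℝ≥0∞) ^ δ < a := by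
  simpa only [hContent, iInf_lt_iff, exists_prop] using h

lemma hContent_mono {E F : Set (EuclideanSpace ℝ (Fin n))} (h : E ⊆ F) :
    hContent n δ E ≤ hContent n δ F :=
  le_iInf₂ fun c r => le_iInf fun hF => iInf₂_le_of_le c r (iInf_le _ (h.trans hF))

lemma hContent_empty (hδ : 0 < δ) : hContent n δ ∅ = 0 := by
  simpa [ENNReal.zero_rpow_of_pos hδ] using
    hContent_le_tsum (n := n) (δ := δ) (fun _ : ℕ => 0) (fun _ => 0) (empty_subset _)

lemma hContent_iUnion_le (E : ℕ → Set (EuclideanSpace ℝ (Fin n))) :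
    hContent n δ (⋃ i, E i) ≤ ∑' i, hContent n δ (E i) := by
  refine ENNReal.le_of_forall_pos_le_add fun ε hε hlt => ?_
  obtain ⟨η, hη, hηε⟩ := ENNReal.exists_pos_sum_of_countable (coe_ne_zero.2 hε.ne') ℕ
  have hcover i : ∃ (c : ℕ → EuclideanSpace ℝ (Fin n)) (r : ℕ → NNReal),
      E i ⊆ ⋃ j, ball (c j) (r j) ∧ ∑' j, (r j : ℝ≥0∞) ^ δ < hContent n δ (E i) + η i :=
    exists_ball_cover_tsum_lt <| ENNReal.lt_add_right
      (ne_top_of_le_ne_top hlt.ne (ENNReal.le_tsum i)) (coe_ne_zero.2 (hη i).ne')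
  choose c r hcov hsum using hcover
  have hE : ⋃ i, E i ⊆ ⋃ ij : ℕ × ℕ, ball (c ij.1 ij.2) (r ij.1 ij.2) :=
    iUnion_subset fun i => (hcov i).trans <| iUnion_subset fun j =>
      subset_iUnion (fun ij : ℕ × ℕ => ball (c ij.1 ij.2) (r ij.1 ij.2)) (i, j)
  calc hContent n δ (⋃ i, E i) ≤ ∑' ij : ℕ × ℕ, (r ij.1 ij.2 : ℝ≥0∞) ^ δ :=
        hContent_le_tsum (fun ij : ℕ × ℕ => c ij.1 ij.2) _ hE
    _ = ∑' i, ∑' j, (r i j : ℝ≥0∞) ^ δ := ENNReal.tsum_prod (f := fun i j => (r i j : ℝ≥0∞) ^ δ)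
    _ ≤ ∑' i, (hContent n δ (E i) + η i) := ENNReal.tsum_le_tsum fun i => (hsum i).le
    _ = ∑' i, hContent n δ (E i) + ∑' i, (η i : ℝ≥0∞) := ENNReal.tsum_add
    _ ≤ ∑' i, hContent n δ (E i) + ε := by gcongr

variable (n) in
noncomputable def hContentOuterMeasure (hδ : 0 < δ) : OuterMeasure (EuclideanSpace ℝ (Fin n)) where
  measureOf := hContent n δ
  empty := hContent_empty hδ
  mono := hContent_mono
  iUnion_nat s _ := hContent_iUnion_le s

end HausdorffContent

theorem choquet_holder_general (n : ℕ) (δ : ℝ) (hδ0 : 0 < δ)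
    (Ω : Set (EuclideanSpace ℝ (Fin n))) (f g : EuclideanSpace ℝ (Fin n) → ℝ≥0∞)
    (p q : ℝ) (hp : 1 < p) (hpq : 1 / p + 1 / q = 1) :
    choquet n δ Ω (fun x => f x * g x) ≤
      2 * (choquet n δ Ω (fun x => f x ^ p)) ^ (1 / p) *
        (choquet n δ Ω (fun x => g x ^ q)) ^ (1 / q) :=
  (hContentOuterMeasure n hδ0).choquetIntegral_mul_le
    (Real.holderConjugate_iff.2 ⟨hp, by simpa only [one_div] using hpq⟩)

/-- Hölder's inequality for Choquet integrals with respect to Hausdorff content. -/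
theorem choquet_holder (n : ℕ) (hn : 1 ≤ n) (δ : ℝ) (hδ0 : 0 < δ) (hδn : δ ≤ n)
    (Ω : Set (EuclideanSpace ℝ (Fin n))) (f g : EuclideanSpace ℝ (Fin n) → ℝ≥0∞)
    (p q : ℝ) (hp : 1 < p) (hq : 1 < q) (hpq : 1 / p + 1 / q = 1) :
    choquet n δ Ω (fun x => f x * g x) ≤
      2 * (choquet n δ Ω (fun x => f x ^ p)) ^ (1 / p) *
        (choquet n δ Ω (fun x => g x ^ q)) ^ (1 / q) :=
  choquet_holder_general n δ hδ0 Ω f g p q hp hpq
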